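/- arXiv:2410.17583 — 2 statements merged into one kernel-verified Lean document; each statement's English description precedes it below -/
import Mathlib

section
/- Let $d \geq 1$, $\sigma$ the normalized surface measure on $\mathbb{S}^{2d-1}$, and $\mathfrak{A}_1(f_1,f_2)(x,y) = \int_{\mathbb{S}^{2d-1}} f_1(x+z_1,y) f_2(x,y+z_2)\, d\sigma(z_1,z_2)$. Assume the linear inequality $\big\| \int_{\mathbb{S}^{2d-1}} |g(\cdot - z_1, \cdot + z_2)| \, d\sigma(z_1,z_2) \big\|_{L^{2d+1}(\mathbb{R}^{2d})} \lesssim \|g\|_{L^{(2d+1)/(2d)}(\mathbb{R}^{2d})}$ (the $L^p$-improving property of spherical averaging). Then $\|\mathfrak{A}_1(f_1,f_2)\|_{L^1(\mathbb{R}^{2d})} \lesssim \|f_1\|_{L^{(2d+1)/(2d)}(\mathbb{R}^{2d})} \|f_2\|_{L^{(2d+1)/(2d)}(\mathbb{R}^{2d})}$. -/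
open MeasureTheory Metric
open scoped ENNReal NNReal

/-- The normalized surface measure on the unit sphere `𝕊^{2d-1} ⊂ ℝ^d × ℝ^d`. -/
noncomputable def normSphereMeasure (d : ℕ) :
    Measure (sphere (0 : EuclideanSpace ℝ (Fin d ⊕ Fin d)) 1) :=
  ((volume : Measure (EuclideanSpace ℝ (Fin d ⊕ Fin d))).toSphere Set.univ)⁻¹ •
    (volume : Measure (EuclideanSpace ℝ (Fin d ⊕ Fin d))).toSphere

/-- The first `d` coordinates of a point of `ℝ^{2d}`. -/
noncomputable def firstHalf (d : ℕ) (z : EuclideanSpace ℝ (Fin d ⊕ Fin d)) :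
    EuclideanSpace ℝ (Fin d) :=
  (EuclideanSpace.equiv (Fin d) ℝ).symm fun i => z (Sum.inl i)

/-- The last `d` coordinates of a point of `ℝ^{2d}`. -/
noncomputable def secondHalf (d : ℕ) (z : EuclideanSpace ℝ (Fin d ⊕ Fin d)) :
    EuclideanSpace ℝ (Fin d) :=
  (EuclideanSpace.equiv (Fin d) ℝ).symm fun i => z (Sum.inr i)

namespace TwistedAux

/-- abbreviation for `ℝ^d × ℝ^d`. -/
abbrev X (d : ℕ) := EuclideanSpace ℝ (Fin d) × EuclideanSpace ℝ (Fin d)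

/-- abbreviation for the sphere. -/
abbrev Sp (d : ℕ) := sphere (0 : EuclideanSpace ℝ (Fin d ⊕ Fin d)) 1

instance (d : ℕ) : IsFiniteMeasure (normSphereMeasure d) := by
  constructor
  rw [normSphereMeasure, Measure.smul_apply, smul_eq_mul]
  exact lt_of_le_of_lt (ENNReal.inv_mul_le_one _) ENNReal.one_lt_top

theorem continuous_firstHalf (d : ℕ) : Continuous (firstHalf d) := by
  unfold firstHalf
  exact (EuclideanSpace.equiv (Fin d) ℝ).symm.continuous.comp
    (continuous_pi fun i => (EuclideanSpace.proj (𝕜 := ℝ) (Sum.inl i)).continuous)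

theorem continuous_secondHalf (d : ℕ) : Continuous (secondHalf d) := by
  unfold secondHalf
  exact (EuclideanSpace.equiv (Fin d) ℝ).symm.continuous.comp
    (continuous_pi fun i => (EuclideanSpace.proj (𝕜 := ℝ) (Sum.inr i)).continuous)

instance (d : ℕ) : (volume : Measure (X d)).IsAddRightInvariant := by
  rw [Measure.volume_eq_prod]; exact Measure.prod.instIsAddRightInvariant

end TwistedAux

open TwistedAux

theorem twisted_single_average_Lp_improving (d : ℕ) (hd : 1 ≤ d) (A : ℝ≥0)
    (hA : ∀ g : EuclideanSpace ℝ (Fin d) × EuclideanSpace ℝ (Fin d) → ℝ, Measurable g →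
      eLpNorm (fun p : EuclideanSpace ℝ (Fin d) × EuclideanSpace ℝ (Fin d) =>
          ∫ z : sphere (0 : EuclideanSpace ℝ (Fin d ⊕ Fin d)) 1,
            |g (p.1 - firstHalf d z, p.2 + secondHalf d z)| ∂(normSphereMeasure d))
          ((2 * d + 1 : ℕ) : ℝ≥0∞) volume
        ≤ (A : ℝ≥0∞) * eLpNorm g (ENNReal.ofReal ((2 * (d:ℝ) + 1) / (2 * (d:ℝ)))) volume) :
    ∃ C : ℝ≥0,
      ∀ f₁ f₂ : SchwartzMap (EuclideanSpace ℝ (Fin d) × EuclideanSpace ℝ (Fin d)) ℝ,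
        eLpNorm (fun p : EuclideanSpace ℝ (Fin d) × EuclideanSpace ℝ (Fin d) =>
            ∫ z : sphere (0 : EuclideanSpace ℝ (Fin d ⊕ Fin d)) 1,
              f₁ (p.1 + firstHalf d z, p.2) * f₂ (p.1, p.2 + secondHalf d z)
              ∂(normSphereMeasure d)) 1 volume
          ≤ (C : ℝ≥0∞)
            * eLpNorm (fun p => f₁ p) (ENNReal.ofReal ((2 * (d:ℝ) + 1) / (2 * (d:ℝ)))) volume
            * eLpNorm (fun p => f₂ p) (ENNReal.ofReal ((2 * (d:ℝ) + 1) / (2 * (d:ℝ)))) volume := by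
  classical
  refine ⟨A, fun f₁ f₂ => ?_⟩
  have hd1 : (1:ℝ) ≤ (d:ℝ) := by exact_mod_cast hd
  have h2d : (0:ℝ) < 2*(d:ℝ) := by linarith
  set σ := normSphereMeasure d with hσdef
  set pr : ℝ := (2 * (d:ℝ) + 1) / (2 * (d:ℝ)) with hprdef
  set qr : ℝ := 2 * (d:ℝ) + 1 with hqrdef
  have hq0 : (0:ℝ) < qr := by rw [hqrdef]; linarith
  have hpq : pr.HolderConjugate qr := by
    refine Real.holderConjugate_iff.mpr ⟨?_, ?_⟩
    · rw [hprdef]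
      rw [lt_div_iff₀ h2d]
      linarith
    · rw [hprdef, hqrdef]
      have h1 : 2 * (d:ℝ) ≠ 0 := ne_of_gt h2d
      have h2 : 2 * (d:ℝ) + 1 ≠ 0 := by linarith
      field_simp
  have hpr0 : (0:ℝ) < pr := hpq.pos
  -- continuity helpers
  have hS1 : Continuous fun z : Sp d => firstHalf d ↑z :=
    (continuous_firstHalf d).comp continuous_subtype_val
  have hS2 : Continuous fun z : Sp d => secondHalf d ↑z :=
    (continuous_secondHalf d).comp continuous_subtype_val
  -- measurability of the two kernels on the product space
  have hK : Measurable fun q : X d × Sp d =>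
      ((‖f₁ (q.1.1 + firstHalf d ↑q.2, q.1.2)‖₊ : ℝ≥0∞) *
        ‖f₂ (q.1.1, q.1.2 + secondHalf d ↑q.2)‖₊) := by
    apply Measurable.fun_mul
    · exact ((f₁.continuous.comp (((continuous_fst.comp continuous_fst).add
        (hS1.comp continuous_snd)).prodMk (continuous_snd.comp continuous_fst))).measurable).enorm
    · exact ((f₂.continuous.comp ((continuous_fst.comp continuous_fst).prodMk
        ((continuous_snd.comp continuous_fst).add (hS2.comp continuous_snd)))).measurable).enorm
  have hK₂ : Measurable fun q : X d × Sp d =>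
      (‖f₂ (q.1.1 - firstHalf d ↑q.2, q.1.2 + secondHalf d ↑q.2)‖₊ : ℝ≥0∞) :=
    ((f₂.continuous.comp (((continuous_fst.comp continuous_fst).sub
      (hS1.comp continuous_snd)).prodMk
      ((continuous_snd.comp continuous_fst).add (hS2.comp continuous_snd)))).measurable).enorm
  have hK' : Measurable fun q : X d × Sp d =>
      ((‖f₁ q.1‖₊ : ℝ≥0∞) *
        ‖f₂ (q.1.1 - firstHalf d ↑q.2, q.1.2 + secondHalf d ↑q.2)‖₊) :=
    (f₁.continuous.measurable.enorm.comp measurable_fst).fun_mul hK₂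
  -- the function appearing in the linear hypothesis
  set H : X d → ℝ := fun p =>
    ∫ z : Sp d, |f₂ (p.1 - firstHalf d ↑z, p.2 + secondHalf d ↑z)| ∂σ with hHdef
  have hGH : ∀ p : X d,
      (∫⁻ z : Sp d, (‖f₂ (p.1 - firstHalf d ↑z, p.2 + secondHalf d ↑z)‖₊ : ℝ≥0∞) ∂σ)
        = (‖H p‖₊ : ℝ≥0∞) := by
    intro p
    have hco : Continuous fun z : Sp d =>
        |f₂ (p.1 - firstHalf d ↑z, p.2 + secondHalf d ↑z)| :=
      (f₂.continuous.comp ((continuous_const.sub hS1).prodMk (continuous_const.add hS2))).abs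
    have hint : Integrable
        (fun z : Sp d => |f₂ (p.1 - firstHalf d ↑z, p.2 + secondHalf d ↑z)|) σ :=
      hco.integrable_of_hasCompactSupport (isClosed_tsupport _).isCompact
    rw [hHdef, ← enorm_eq_nnnorm, Real.enorm_eq_ofReal (integral_nonneg fun z => abs_nonneg _),
      ofReal_integral_eq_lintegral_ofReal hint
        (Filter.Eventually.of_forall fun z => abs_nonneg _)]
    exact lintegral_congr fun z => Real.enorm_eq_ofReal_abs _
  have hG : Measurable fun p : X d =>
      ∫⁻ z : Sp d, (‖f₂ (p.1 - firstHalf d ↑z, p.2 + secondHalf d ↑z)‖₊ : ℝ≥0∞) ∂σ :=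
    hK₂.lintegral_prod_right'
  -- exponents
  have hqQ : (((2 * d + 1 : ℕ) : ℝ≥0∞)).toReal = qr := by
    rw [ENNReal.toReal_natCast, hqrdef]; push_cast; ring
  have hQ0 : ((2 * d + 1 : ℕ) : ℝ≥0∞) ≠ 0 := by
    simp
  have hQtop : ((2 * d + 1 : ℕ) : ℝ≥0∞) ≠ ∞ := ENNReal.natCast_ne_top _
  have hP0 : ENNReal.ofReal pr ≠ 0 := by
    simp [ENNReal.ofReal_eq_zero, not_le, hpr0]
  have hPtop : ENNReal.ofReal pr ≠ ∞ := ENNReal.ofReal_ne_top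
  -- main estimate
  rw [eLpNorm_one_eq_lintegral_enorm]
  calc
    ∫⁻ p : X d, (‖∫ z : Sp d, f₁ (p.1 + firstHalf d ↑z, p.2) *
        f₂ (p.1, p.2 + secondHalf d ↑z) ∂σ‖₊ : ℝ≥0∞) ∂volume
      ≤ ∫⁻ p : X d, ∫⁻ z : Sp d, ((‖f₁ (p.1 + firstHalf d ↑z, p.2)‖₊ : ℝ≥0∞) *
          ‖f₂ (p.1, p.2 + secondHalf d ↑z)‖₊) ∂σ ∂volume := by
        refine lintegral_mono fun p => ?_
        refine (enorm_integral_le_lintegral_enorm _).trans (le_of_eq ?_)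
        exact lintegral_congr fun z => by rw [enorm_mul]; rfl
    _ = ∫⁻ z : Sp d, ∫⁻ p : X d, ((‖f₁ (p.1 + firstHalf d ↑z, p.2)‖₊ : ℝ≥0∞) *
          ‖f₂ (p.1, p.2 + secondHalf d ↑z)‖₊) ∂volume ∂σ :=
        lintegral_lintegral_swap hK.aemeasurable
    _ = ∫⁻ z : Sp d, ∫⁻ p : X d, ((‖f₁ p‖₊ : ℝ≥0∞) *
          ‖f₂ (p.1 - firstHalf d ↑z, p.2 + secondHalf d ↑z)‖₊) ∂volume ∂σ := by
        refine lintegral_congr fun z => ?_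
        rw [← lintegral_add_right_eq_self (μ := (volume : Measure (X d)))
          (fun p : X d => (‖f₁ p‖₊ : ℝ≥0∞) *
            ‖f₂ (p.1 - firstHalf d ↑z, p.2 + secondHalf d ↑z)‖₊)
          (firstHalf d ↑z, 0)]
        refine lintegral_congr fun p => ?_
        have hp : p + ((firstHalf d ↑z : EuclideanSpace ℝ (Fin d)),
            (0 : EuclideanSpace ℝ (Fin d))) = (p.1 + firstHalf d ↑z, p.2) := by
          simp [Prod.ext_iff]
        simp [hp, add_sub_cancel_right]
    _ = ∫⁻ p : X d, ∫⁻ z : Sp d, ((‖f₁ p‖₊ : ℝ≥0∞) *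
          ‖f₂ (p.1 - firstHalf d ↑z, p.2 + secondHalf d ↑z)‖₊) ∂σ ∂volume :=
        (lintegral_lintegral_swap hK'.aemeasurable).symm
    _ = ∫⁻ p : X d, (‖f₁ p‖₊ : ℝ≥0∞) *
          ∫⁻ z : Sp d, (‖f₂ (p.1 - firstHalf d ↑z, p.2 + secondHalf d ↑z)‖₊ : ℝ≥0∞) ∂σ
          ∂volume :=
        lintegral_congr fun p => lintegral_const_mul' _ _ ENNReal.coe_ne_top
    _ ≤ (∫⁻ p : X d, (‖f₁ p‖₊ : ℝ≥0∞) ^ pr ∂volume) ^ (1 / pr) *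
          (∫⁻ p : X d, (∫⁻ z : Sp d,
            (‖f₂ (p.1 - firstHalf d ↑z, p.2 + secondHalf d ↑z)‖₊ : ℝ≥0∞) ∂σ) ^ qr
            ∂volume) ^ (1 / qr) :=
        ENNReal.lintegral_mul_le_Lp_mul_Lq volume hpq
          f₁.continuous.measurable.enorm.aemeasurable hG.aemeasurable
    _ = eLpNorm (fun p => f₁ p) (ENNReal.ofReal pr) volume *
          eLpNorm H ((2 * d + 1 : ℕ) : ℝ≥0∞) volume := by
        rw [eLpNorm_eq_lintegral_rpow_enorm_toReal hP0 hPtop,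
          eLpNorm_eq_lintegral_rpow_enorm_toReal hQ0 hQtop,
          ENNReal.toReal_ofReal hpr0.le, hqQ]
        congr 1
        congr 1
        exact lintegral_congr fun p => by rw [hGH p]; rfl
    _ ≤ eLpNorm (fun p => f₁ p) (ENNReal.ofReal pr) volume *
          ((A : ℝ≥0∞) * eLpNorm (fun p => f₂ p) (ENNReal.ofReal pr) volume) :=
        mul_le_mul_right (hA (fun p => f₂ p) f₂.continuous.measurable) _
    _ = (A : ℝ≥0∞) * eLpNorm (fun p => f₁ p) (ENNReal.ofReal pr) volume *
          eLpNorm (fun p => f₂ p) (ENNReal.ofReal pr) volume := by ring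
end

section
/- Let $\lambda \geq 1$, $\gamma \in (0,1)$. Suppose $m_1, m_2 \in \mathbb{Z}^2$ and there exist $(x,y,t) \in \mathbb{R}^2 \times \mathbb{R}$ with $(x+\cos t, y) \in Q_{m_1}$ and $(x, y+\sin t) \in Q_{m_2}$, where $Q_m$ denotes the cube of side length $4\lambda^{-\gamma}$ centered at $\lambda^{-\gamma} m$. Then $(m_{1,1}-m_{2,1})^2 + (m_{2,2}-m_{1,2})^2 = \lambda^{2\gamma} + O(\lambda^{\gamma})$, i.e., there is an absolute constant $C$ such that $|(m_{1,1}-m_{2,1})^2 + (m_{2,2}-m_{1,2})^2 - \lambda^{2\gamma}| \leq C\lambda^{\gamma}$. -/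
/-!
Write `δ = Λ^(-γ)` and `(a, b) = (m₁.1 - m₂.1, m₂.2 - m₁.2)`. Subtracting the centres of the two
cubes shows that `δ • (a, b)` lies within `4δ` of the unit vector `(cos t, sin t)` in each
coordinate, so `δ²(a² + b²)` is within `O(δ)` of `cos² t + sin² t = 1`; multiplying by
`δ⁻² = Λ^(2γ)` gives the claim.
-/

open Real

lemma abs_sub_sub_mul_sub_le {u w δ m₁ m₂ ε : ℝ} (h₁ : |u - δ * m₁| ≤ ε)
    (h₂ : |w - δ * m₂| ≤ ε) : |(u - w) - δ * (m₁ - m₂)| ≤ 2 * ε := by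
  calc |(u - w) - δ * (m₁ - m₂)| = |(u - δ * m₁) - (w - δ * m₂)| := by ring_nf
    _ ≤ |u - δ * m₁| + |w - δ * m₂| := abs_sub _ _
    _ ≤ 2 * ε := by linarith

lemma abs_sq_sub_sq_le_of_abs_le_one {p q r : ℝ} (h : |p - q| ≤ r) (hq : |q| ≤ 1) :
    |p ^ 2 - q ^ 2| ≤ r * (r + 2) := by
  have hsum : |p + q| ≤ r + 2 :=
    calc |p + q| = |(p - q) + 2 * q| := by ring_nf
      _ ≤ |p - q| + 2 * |q| := by rw [← abs_two, ← abs_mul, abs_two]; exact abs_add_le _ _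
      _ ≤ r + 2 := by linarith
  rw [sq_sub_sq, abs_mul, mul_comm]
  exact mul_le_mul h hsum (abs_nonneg _) ((abs_nonneg _).trans h)

lemma abs_sq_add_sq_sub_one_le_of_near_cos_sin {p q t r : ℝ} (hp : |p - cos t| ≤ r)
    (hq : |q - sin t| ≤ r) : |p ^ 2 + q ^ 2 - 1| ≤ 2 * (r * (r + 2)) := by
  have hcos := abs_sq_sub_sq_le_of_abs_le_one hp (abs_cos_le_one t)
  have hsin := abs_sq_sub_sq_le_of_abs_le_one hq (abs_sin_le_one t)
  calc |p ^ 2 + q ^ 2 - 1| = |(p ^ 2 - cos t ^ 2) + (q ^ 2 - sin t ^ 2)| := by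
        rw [← cos_sq_add_sin_sq t]; ring_nf
    _ ≤ |p ^ 2 - cos t ^ 2| + |q ^ 2 - sin t ^ 2| := abs_add_le _ _
    _ ≤ 2 * (r * (r + 2)) := by linarith

lemma abs_sub_sq_le_of_abs_inv_sq_mul_sub_one_le {E x K : ℝ} (hE : 0 < E)
    (h : |E⁻¹ ^ 2 * x - 1| ≤ K * E⁻¹) : |x - E ^ 2| ≤ K * E := by
  have hE2 : 0 < E ^ 2 := by positivity
  calc |x - E ^ 2| = E ^ 2 * |E⁻¹ ^ 2 * x - 1| := by
        rw [← abs_of_pos hE2, ← abs_mul, abs_of_pos hE2]; congr 1; field_simp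
    _ ≤ E ^ 2 * (K * E⁻¹) := mul_le_mul_of_nonneg_left h hE2.le
    _ = K * E := by field_simp

theorem index_pairs_near_circle :
    ∃ C : ℝ, 0 < C ∧ ∀ (Λ γ : ℝ), 1 ≤ Λ → 0 < γ → γ < 1 →
      ∀ (m₁ m₂ : ℤ × ℤ) (x y t : ℝ),
        |(x + Real.cos t) - Λ ^ (-γ) * (m₁.1 : ℝ)| ≤ 2 * Λ ^ (-γ) →
        |y - Λ ^ (-γ) * (m₁.2 : ℝ)| ≤ 2 * Λ ^ (-γ) →
        |x - Λ ^ (-γ) * (m₂.1 : ℝ)| ≤ 2 * Λ ^ (-γ) →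
        |(y + Real.sin t) - Λ ^ (-γ) * (m₂.2 : ℝ)| ≤ 2 * Λ ^ (-γ) →
        |((m₁.1 : ℝ) - (m₂.1 : ℝ)) ^ 2 + ((m₂.2 : ℝ) - (m₁.2 : ℝ)) ^ 2 - Λ ^ (2 * γ)|
          ≤ C * Λ ^ γ := by
  refine ⟨48, by norm_num, fun Λ γ hΛ hγ _ m₁ m₂ x y t h₁ h₂ h₃ h₄ => ?_⟩
  have hΛ0 : 0 < Λ := one_pos.trans_le hΛ
  have hE : 0 < Λ ^ γ := rpow_pos_of_pos hΛ0 γ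
  have hδ : Λ ^ (-γ) = (Λ ^ γ)⁻¹ := rpow_neg hΛ0.le γ
  have hδ1 : (Λ ^ γ)⁻¹ ≤ 1 := inv_le_one_of_one_le₀ (one_le_rpow hΛ hγ.le)
  have hΛ2 : Λ ^ (2 * γ) = (Λ ^ γ) ^ 2 := by
    rw [mul_comm, rpow_mul hΛ0.le, rpow_two]
  rw [hδ] at h₁ h₂ h₃ h₄
  rw [hΛ2]
  apply abs_sub_sq_le_of_abs_inv_sq_mul_sub_one_le hE
  have hcos := abs_sub_sub_mul_sub_le h₁ h₃
  have hsin := abs_sub_sub_mul_sub_le h₄ h₂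
  simp only [add_sub_cancel_left, abs_sub_comm (cos t), abs_sub_comm (sin t)] at hcos hsin
  have hcircle := abs_sq_add_sq_sub_one_le_of_near_cos_sin hcos hsin
  set δ := (Λ ^ γ)⁻¹
  calc |δ ^ 2 * (((m₁.1 : ℝ) - m₂.1) ^ 2 + ((m₂.2 : ℝ) - m₁.2) ^ 2) - 1|
      = |(δ * (m₁.1 - m₂.1)) ^ 2 + (δ * (m₂.2 - m₁.2)) ^ 2 - 1| := by ring_nf
    _ ≤ 2 * (2 * (2 * δ) * (2 * (2 * δ) + 2)) := hcircle
    _ ≤ 48 * δ := by nlinarith [inv_pos.mpr hE]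
end
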